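/- arXiv:hep-ph/9710236 — 3 statements merged into one kernel-verified Lean document; each statement's English description precedes it below -/
import Mathlib

section
/- Let a, b ∈ ℂ with |a|² + |b|² = 1, δ ∈ ℝ, x ∈ ℝ, and write a = cos ω·e^{i(δ+γ)}, b = sin ω·e^{i(ρ−γ)} for real ω, γ, ρ. Then |2a·conj(b) + ix(e^{−iδ}a² + e^{iδ}conj(b)²)|² = (sin 2ω − x cos 2ω sin ρ)² + x² cos² ρ. -/
/-!
Factor out the phase: with `a = c e^{i(δ+γ)}` and `b = s e^{i(ρ-γ)}`, the quantity equals
`e^{i(δ+2γ-ρ)} (2cs + ix(c² e^{iρ} + s² e^{-iρ}))`. For `c = cos ω`, `s = sin ω` the bracket is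
`(sin 2ω - x cos 2ω sin ρ) + i x cos ρ`, and the unimodular prefactor drops out of the norm.
-/

open Complex

lemma two_mul_mul_conj_add_I_mul_eq_exp_mul (x δ γ ρ c s : ℝ) :
    2 * (c * exp (I * (δ + γ))) * (starRingEnd ℂ) (s * exp (I * (ρ - γ))) + I * x *
        (exp (-(I * δ)) * (c * exp (I * (δ + γ))) ^ 2 +
          exp (I * δ) * ((starRingEnd ℂ) (s * exp (I * (ρ - γ)))) ^ 2) =
      exp ((δ + 2 * γ - ρ : ℝ) * I) *
        (2 * c * s + I * x * (c ^ 2 * exp (ρ * I) + s ^ 2 * exp (-(ρ * I)))) := by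
  simp only [map_mul, conj_ofReal, ← exp_conj, map_sub, conj_I]
  push_cast
  simp only [two_mul, mul_add, add_mul, mul_sub, sub_mul, neg_mul, exp_add, exp_sub, exp_neg]
  field_simp

lemma cos_sq_mul_exp_add_sin_sq_mul_exp_neg (ω ρ : ℝ) :
    (Real.cos ω : ℂ) ^ 2 * exp (ρ * I) + (Real.sin ω : ℂ) ^ 2 * exp (-(ρ * I)) =
      Real.cos ρ + Real.cos (2 * ω) * Real.sin ρ * I := by
  rw [← neg_mul, exp_mul_I, exp_mul_I, Real.cos_two_mul]
  push_cast
  rw [Complex.cos_neg, Complex.sin_neg]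
  linear_combination (Complex.cos ρ - Complex.sin ρ * I) * sin_sq_add_cos_sq (ω : ℂ)

theorem stmt_11_general (x δ ω γ ρ : ℝ) (a b : ℂ)
    (ha : a = (Real.cos ω : ℂ) * Complex.exp (Complex.I * (δ + γ)))
    (hb : b = (Real.sin ω : ℂ) * Complex.exp (Complex.I * (ρ - γ))) :
    ‖2 * a * (starRingEnd ℂ) b + Complex.I * (x : ℂ) *
        (Complex.exp (-(Complex.I * δ)) * a ^ 2 +
          Complex.exp (Complex.I * δ) * ((starRingEnd ℂ) b) ^ 2)‖ ^ 2 =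
      (Real.sin (2 * ω) - x * Real.cos (2 * ω) * Real.sin ρ) ^ 2 +
        x ^ 2 * Real.cos ρ ^ 2 := by
  have bracket : 2 * (Real.cos ω : ℂ) * Real.sin ω + I * x *
        ((Real.cos ω : ℂ) ^ 2 * exp (ρ * I) + (Real.sin ω : ℂ) ^ 2 * exp (-(ρ * I))) =
      ((Real.sin (2 * ω) - x * Real.cos (2 * ω) * Real.sin ρ : ℝ) : ℂ) +
        ((x * Real.cos ρ : ℝ) : ℂ) * I := by
    rw [cos_sq_mul_exp_add_sin_sq_mul_exp_neg, Real.sin_two_mul]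
    push_cast
    linear_combination ((x : ℂ) * Complex.cos (2 * ω) * Complex.sin ρ) * I_sq
  subst ha hb
  rw [two_mul_mul_conj_add_I_mul_eq_exp_mul, bracket, norm_mul, norm_exp_ofReal_mul_I, one_mul,
    Complex.sq_norm, normSq_add_mul_I]
  ring

theorem stmt_11 (x δ ω γ ρ : ℝ) (a b : ℂ)
    (ha : a = (Real.cos ω : ℂ) * Complex.exp (Complex.I * (δ + γ)))
    (hb : b = (Real.sin ω : ℂ) * Complex.exp (Complex.I * (ρ - γ)))
    (hab : ‖a‖ ^ 2 + ‖b‖ ^ 2 = 1) :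
    ‖2 * a * (starRingEnd ℂ) b + Complex.I * (x : ℂ) *
        (Complex.exp (-(Complex.I * δ)) * a ^ 2 +
          Complex.exp (Complex.I * δ) * ((starRingEnd ℂ) b) ^ 2)‖ ^ 2 =
      (Real.sin (2 * ω) - x * Real.cos (2 * ω) * Real.sin ρ) ^ 2 +
        x ^ 2 * Real.cos ρ ^ 2 :=
  stmt_11_general x δ ω γ ρ a b ha hb
end

section
/- Under the assumptions y = 0, S unitary, and |p/q| = 1 (p/q = e^{iδ}), the like-sign dilepton event numbers are equal: N₊₊ = N₋₋, where N₊₊ = (B²/(2Γ))|p/q|² I₋ + ζB² |∫₀^∞ T₁₁*(t)T₁₂(t)dt|² and N₋₋ = (B²/(2Γ))|q/p|² I₋ + ζB² |∫₀^∞ T₂₂*(t)T₂₁(t)dt|² (using |det S| = 1). -/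
open MeasureTheory Matrix Complex
open scoped ComplexConjugate

/-!
Conjugating `diag(g_H, g_L)` by `M` gives `[[g₊, (p/q) g₋], [(q/p) g₋, g₊]]` with
`g± = (g_H ± g_L)/2`, and `q/p = conj (p/q)` since `|p/q| = 1`. For `T = P S`, expanding
`conj T₁₁ T₁₂ + T₂₂ conj T₂₁` leaves only multiples of `conj S₁₁ S₁₂ + conj S₂₁ S₂₂`, which
vanishes by unitarity, and of `conj g₊ g₋ + g₊ conj g₋ = (|g_H|² - |g_L|²)/2`, which vanishes
because `y = 0`. So the two integrands are negative conjugates of each other, their integrals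
have equal norm, and the prefactors `|p/q|² = |q/p|² = 1` agree.
-/

theorem fin_two_mul_diagonal_mul_inv {K : Type*} [Field K] [NeZero (2 : K)] {p q : K}
    (hp : p ≠ 0) (hq : q ≠ 0) (x y : K) :
    !![p, p; q, -q] * diagonal ![x, y] * (!![p, p; q, -q])⁻¹ =
      !![(x + y) / 2, p / q * ((x - y) / 2); q / p * ((x - y) / 2), (x + y) / 2] := by
  have h2 : (2 : K) ≠ 0 := two_ne_zero
  have hinv : (!![p, p; q, -q])⁻¹ = !![(2 * p)⁻¹, (2 * q)⁻¹; (2 * p)⁻¹, -(2 * q)⁻¹] := by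
    refine inv_eq_right_inv ?_
    ext i j
    fin_cases i <;> fin_cases j <;> simp <;> field_simp <;> ring
  rw [hinv, diagonal_fin_two, mul_fin_two, mul_fin_two]
  ext i j
  fin_cases i <;> fin_cases j <;> simp <;> field_simp <;> ring

theorem conj_mul_eq_neg_conj_conj_mul {a b r : ℂ} (hr : ‖r‖ = 1)
    (hab : conj a * b + a * conj b = 0) {S X : Matrix (Fin 2) (Fin 2) ℂ} (hS : Sᴴ * S = 1)
    (hX : X = !![a, r * b; r⁻¹ * b, a] * S) :
    conj (X 0 0) * X 0 1 = -conj (conj (X 1 1) * X 1 0) := by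
  have horth : conj (S 0 0) * S 0 1 + conj (S 1 0) * S 1 1 = 0 := by
    simpa [mul_apply, Fin.sum_univ_two] using congrFun₂ hS 0 1
  rw [inv_eq_conj hr] at hX
  subst hX
  simp only [mul_apply, of_apply, cons_val', cons_val_fin_one, cons_val_zero, cons_val_one,
    Fin.sum_univ_two, map_add, map_mul, RingHomCompTriple.comp_apply, RingHom.id_apply]
  linear_combination (conj a * a + conj r * r * conj b * b) * horth +
    (r * conj (S 0 0) * S 1 1 + conj r * S 0 1 * conj (S 1 0)) * hab

theorem norm_exp_neg_I_mul_add_mul (m t : ℝ) (c : ℂ) :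
    ‖exp (-(I * m + c) * t)‖ = Real.exp (-c.re * t) := by
  simp [norm_exp]

theorem conj_half_add_mul_half_sub_add_eq_zero {z w : ℂ} (h : ‖z‖ = ‖w‖) :
    conj ((z + w) / 2) * ((z - w) / 2) + (z + w) / 2 * conj ((z - w) / 2) = 0 := by
  have hzw : conj z * z = conj w * w := by rw [conj_mul', conj_mul', h]
  simp only [map_div₀, map_add, map_sub, map_ofNat]
  linear_combination hzw / 2

theorem stmt_14_general (mH mL Γ : ℝ) (δ : ℝ)
    (p q : ℂ) (hq : q ≠ 0) (hpq : p = Complex.exp (Complex.I * δ) * q)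
    (gH gL gm : ℝ → ℂ)
    (hgH : ∀ t, gH t = Complex.exp (-(Complex.I * mH + Γ / 2) * t))
    (hgL : ∀ t, gL t = Complex.exp (-(Complex.I * mL + Γ / 2) * t))
    (hgm : ∀ t, gm t = (gH t - gL t) / 2)
    (S M : Matrix (Fin 2) (Fin 2) ℂ)
    (hS : S * S.conjTranspose = 1)
    (hM : M = !![p, p; q, -q])
    (T : ℝ → Matrix (Fin 2) (Fin 2) ℂ)
    (hT : ∀ t, T t = M * Matrix.diagonal ![gH t, gL t] * M⁻¹ * S)
    (B ζ Im : ℝ)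
    (Npp Nmm : ℝ)
    (hNpp : Npp = B ^ 2 / (2 * Γ) * ‖p / q‖ ^ 2 * Im +
      ζ * B ^ 2 *
        ‖∫ t in Set.Ioi (0 : ℝ), (starRingEnd ℂ) (T t 0 0) * T t 0 1‖ ^ 2)
    (hNmm : Nmm = B ^ 2 / (2 * Γ) * ‖q / p‖ ^ 2 * Im +
      ζ * B ^ 2 *
        ‖∫ t in Set.Ioi (0 : ℝ), (starRingEnd ℂ) (T t 1 1) * T t 1 0‖ ^ 2) :
    Npp = Nmm := by
  have hp : p ≠ 0 := hpq ▸ mul_ne_zero (exp_ne_zero _) hq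
  have hpq_norm : ‖p / q‖ = 1 := by
    rw [hpq, mul_div_cancel_right₀ _ hq, norm_exp_I_mul_ofReal]
  have hqp_norm : ‖q / p‖ = 1 := by rw [← inv_div, norm_inv, hpq_norm, inv_one]
  have hpointwise (t : ℝ) : conj (T t 0 0) * T t 0 1 = -conj (conj (T t 1 1) * T t 1 0) := by
    refine conj_mul_eq_neg_conj_conj_mul hpq_norm (a := (gH t + gL t) / 2) (b := gm t) ?_
      (mul_eq_one_comm.mp hS) ?_
    · rw [hgm]
      refine conj_half_add_mul_half_sub_add_eq_zero ?_
      rw [hgH, hgL, norm_exp_neg_I_mul_add_mul, norm_exp_neg_I_mul_add_mul]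
    · rw [hT, hM, fin_two_mul_diagonal_mul_inv hp hq, ← hgm, inv_div]
  have hintegral : ∫ t in Set.Ioi (0 : ℝ), conj (T t 0 0) * T t 0 1 =
      -conj (∫ t in Set.Ioi (0 : ℝ), conj (T t 1 1) * T t 1 0) := by
    simp_rw [hpointwise]
    rw [integral_neg, integral_conj]
  rw [hNpp, hNmm, hpq_norm, hqp_norm, hintegral, norm_neg, RCLike.norm_conj]

theorem stmt_14 (mH mL Γ : ℝ) (hΓ : 0 < Γ) (δ : ℝ)
    (p q : ℂ) (hq : q ≠ 0) (hpq : p = Complex.exp (Complex.I * δ) * q)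
    (hnorm : ‖p‖ ^ 2 + ‖q‖ ^ 2 = 1)
    (gH gL gm : ℝ → ℂ)
    (hgH : ∀ t, gH t = Complex.exp (-(Complex.I * mH + Γ / 2) * t))
    (hgL : ∀ t, gL t = Complex.exp (-(Complex.I * mL + Γ / 2) * t))
    (hgm : ∀ t, gm t = (gH t - gL t) / 2)
    (S M : Matrix (Fin 2) (Fin 2) ℂ)
    (hS : S * S.conjTranspose = 1)
    (hM : M = !![p, p; q, -q])
    (T : ℝ → Matrix (Fin 2) (Fin 2) ℂ)
    (hT : ∀ t, T t = M * Matrix.diagonal ![gH t, gL t] * M⁻¹ * S)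
    (B ζ Im : ℝ) (hB : 0 < B)
    (hIm : Im = ∫ t in Set.Ioi (0 : ℝ), ‖gm t‖ ^ 2)
    (Npp Nmm : ℝ)
    (hNpp : Npp = B ^ 2 / (2 * Γ) * ‖p / q‖ ^ 2 * Im +
      ζ * B ^ 2 *
        ‖∫ t in Set.Ioi (0 : ℝ), (starRingEnd ℂ) (T t 0 0) * T t 0 1‖ ^ 2)
    (hNmm : Nmm = B ^ 2 / (2 * Γ) * ‖q / p‖ ^ 2 * Im +
      ζ * B ^ 2 *
        ‖∫ t in Set.Ioi (0 : ℝ), (starRingEnd ℂ) (T t 1 1) * T t 1 0‖ ^ 2) :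
    Npp = Nmm :=
  stmt_14_general mH mL Γ δ p q hq hpq gH gL gm hgH hgL hgm S M hS hM T hT B ζ Im Npp Nmm hNpp hNmm
end

section
/- Under the assumptions y = 0, S unitary, |p/q| = 1, with Z = |2a·conj(b) + ix(e^{−iδ}a² + e^{iδ}conj(b)²)|², the dilepton event numbers satisfy N₊₊ = N₋₋ = (B²/(4Γ²))·(x²/(1+x²) + ζZ/(1+x²)²) and N₊₋ = N₋₊ = (B²/(4Γ²))·((2+x²)/(1+x²) − ζZ/(1+x²)²). -/
/-!
Every entry of `T t` is a combination of the two amplitudes `g_{H,L}(t) = e^{λ t}` with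
`Re λ = -Γ/2`, so each time integral `∫₀^∞ conj f · g` is a sesquilinear form in the coefficients,
with kernel `∫₀^∞ e^{(conj λ + μ) t} dt = -1/(conj λ + μ)`. In the basis `g± = (g_H ± g_L)/2` its
Gram matrix is `[[2 + x², -ix], [ix, x²]] / (2Γ(1 + x²))`, which gives `I₊` and `I₋` at once.
As `M ĝ M⁻¹ = [[g₊, (p/q) g₋], [(q/p) g₋, g₊]]`, the entries of `T` in this basis are read off
directly, and because `p/q` and the phase `e^{iφ}` of `S` have modulus one the two cross integrals
collapse to `conj W / (2Γ(1 + x²))` and `-W / (2Γ(1 + x²))`, where `Z = |W|²`.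
-/

open MeasureTheory Matrix Complex Set ComplexConjugate

lemma conj_exp_mul_ofReal (c : ℂ) (t : ℝ) : conj (cexp (c * t)) = cexp (conj c * t) := by
  rw [← exp_conj, map_mul, conj_ofReal]

lemma integral_exp_mul_Ioi_zero {a : ℂ} (ha : a.re < 0) :
    ∫ t : ℝ in Ioi 0, cexp (a * t) = -a⁻¹ := by
  simp [integral_exp_mul_complex_Ioi ha, neg_div]

lemma re_conj_add_neg {c₁ c₂ : ℂ} (h₁ : c₁.re < 0) (h₂ : c₂.re < 0) : (conj c₁ + c₂).re < 0 := by
  simp only [add_re, conj_re]; linarith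

lemma integral_conj_mul_exp_add_exp {c₁ c₂ : ℂ} (h₁ : c₁.re < 0) (h₂ : c₂.re < 0)
    (u v u' v' : ℂ) :
    ∫ t : ℝ in Ioi 0, conj (u * cexp (c₁ * t) + v * cexp (c₂ * t)) *
        (u' * cexp (c₁ * t) + v' * cexp (c₂ * t)) =
      -(conj u * u' / (conj c₁ + c₁) + conj u * v' / (conj c₁ + c₂) +
        conj v * u' / (conj c₂ + c₁) + conj v * v' / (conj c₂ + c₂)) := by
  have expand : ∀ t : ℝ, conj (u * cexp (c₁ * t) + v * cexp (c₂ * t)) *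
      (u' * cexp (c₁ * t) + v' * cexp (c₂ * t)) =
      conj u * u' * cexp ((conj c₁ + c₁) * t) + conj u * v' * cexp ((conj c₁ + c₂) * t) +
        conj v * u' * cexp ((conj c₂ + c₁) * t) + conj v * v' * cexp ((conj c₂ + c₂) * t) := by
    intro t
    simp only [map_add, map_mul, conj_exp_mul_ofReal, add_mul, Complex.exp_add]
    ring
  have hint : ∀ {c d : ℂ}, c.re < 0 → d.re < 0 → ∀ k : ℂ,
      IntegrableOn (fun t : ℝ => k * cexp ((conj c + d) * t)) (Ioi 0) := fun hc hd k =>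
    (integrableOn_exp_mul_complex_Ioi (re_conj_add_neg hc hd) 0).const_mul k
  simp_rw [expand]
  rw [integral_add ?i₃ (hint h₂ h₂ _), integral_add ?i₂ (hint h₂ h₁ _),
    integral_add (hint h₁ h₁ _) (hint h₁ h₂ _)]
  case i₂ => exact (hint h₁ h₁ _).add (hint h₁ h₂ _)
  case i₃ => exact ((hint h₁ h₁ _).add (hint h₁ h₂ _)).add (hint h₂ h₁ _)
  simp only [integral_const_mul, integral_exp_mul_Ioi_zero (re_conj_add_neg h₁ h₁),
    integral_exp_mul_Ioi_zero (re_conj_add_neg h₁ h₂), integral_exp_mul_Ioi_zero (re_conj_add_neg h₂ h₁),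
    integral_exp_mul_Ioi_zero (re_conj_add_neg h₂ h₂)]
  ring

noncomputable def decayAmplitude (m Γ t : ℝ) : ℂ := cexp (-(I * m + Γ / 2) * t)

lemma integral_conj_mul_decayAmplitude {mH mL Γ : ℝ} (hΓ : 0 < Γ) (u v u' v' : ℂ) :
    ∫ t : ℝ in Ioi 0,
        conj (u * decayAmplitude mH Γ t + v * decayAmplitude mL Γ t) *
          (u' * decayAmplitude mH Γ t + v' * decayAmplitude mL Γ t) =
      (conj u * u' + conj v * v') / Γ + conj u * v' / (Γ - I * (mH - mL)) +
        conj v * u' / (Γ + I * (mH - mL)) := by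
  have hre : ∀ m : ℝ, (-(I * m + Γ / 2)).re < 0 := fun m => by simpa using half_pos hΓ
  have hconj : ∀ m m' : ℝ, conj (-(I * m + Γ / 2)) + -(I * m' + Γ / 2) = -(Γ - I * (m - m')) :=
    fun m m' => by simp only [map_neg, map_add, map_mul, conj_I, conj_ofReal, map_div₀, map_ofNat]; ring
  simp only [decayAmplitude]
  rw [integral_conj_mul_exp_add_exp (hre mH) (hre mL), hconj, hconj, hconj, hconj]
  simp only [sub_self, mul_zero, sub_zero, div_neg]
  ring

lemma integral_conj_mul_even_odd {mH mL Γ x : ℝ} (hΓ : 0 < Γ) (hx : x = (mH - mL) / Γ)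
    {gp gm : ℝ → ℂ}
    (hgp : ∀ t, gp t = (decayAmplitude mH Γ t + decayAmplitude mL Γ t) / 2)
    (hgm : ∀ t, gm t = (decayAmplitude mH Γ t - decayAmplitude mL Γ t) / 2)
    (u v u' v' : ℂ) :
    ∫ t : ℝ in Ioi 0, conj (u * gp t + v * gm t) * (u' * gp t + v' * gm t) =
      (conj u * u' * (2 + x ^ 2) + I * x * (conj v * u' - conj u * v') + conj v * v' * x ^ 2) /
        (2 * Γ * (1 + x ^ 2)) := by
  have hrewrite : ∀ (w z : ℂ) (t : ℝ), w * gp t + z * gm t =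
      (w + z) / 2 * decayAmplitude mH Γ t + (w - z) / 2 * decayAmplitude mL Γ t := by
    intro w z t; rw [hgp, hgm]; ring
  simp_rw [hrewrite]
  rw [integral_conj_mul_decayAmplitude hΓ]
  have hΓ0 : (Γ : ℂ) ≠ 0 := by exact_mod_cast hΓ.ne'
  have hx2 : (1 : ℂ) + x ^ 2 ≠ 0 := by exact_mod_cast (by positivity : (1 : ℝ) + x ^ 2 ≠ 0)
  have hΔ : (mH : ℂ) - mL = x * Γ := by rw [hx]; push_cast; field_simp
  have hinv_sub : ((Γ : ℂ) - I * (x * Γ))⁻¹ = (1 + I * x) / (Γ * (1 + x ^ 2)) := by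
    rw [inv_eq_of_mul_eq_one_right]
    rw [mul_div_assoc', div_eq_one_iff_eq (mul_ne_zero hΓ0 hx2)]
    linear_combination (-(x : ℂ) ^ 2 * Γ) * I_sq
  have hinv_add : ((Γ : ℂ) + I * (x * Γ))⁻¹ = (1 - I * x) / (Γ * (1 + x ^ 2)) := by
    rw [inv_eq_of_mul_eq_one_right]
    rw [mul_div_assoc', div_eq_one_iff_eq (mul_ne_zero hΓ0 hx2)]
    linear_combination (-(x : ℂ) ^ 2 * Γ) * I_sq
  rw [hΔ, div_eq_mul_inv _ ((Γ : ℂ) - I * (x * Γ)), div_eq_mul_inv _ ((Γ : ℂ) + I * (x * Γ)),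
    hinv_sub, hinv_add]
  simp only [map_add, map_sub, map_div₀, map_ofNat]
  field_simp
  ring

lemma mixing_mul_diagonal_mul_inv {K : Type*} [Field K] [NeZero (2 : K)] {p q : K}
    (hp : p ≠ 0) (hq : q ≠ 0) (h l : K) :
    !![p, p; q, -q] * diagonal ![h, l] * (!![p, p; q, -q])⁻¹ =
      !![(h + l) / 2, p / q * ((h - l) / 2); q / p * ((h - l) / 2), (h + l) / 2] := by
  have hinv : (!![p, p; q, -q])⁻¹ = !![(2 * p)⁻¹, (2 * q)⁻¹; (2 * p)⁻¹, -(2 * q)⁻¹] := by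
    refine inv_eq_right_inv ?_
    rw [mul_fin_two, one_fin_two]
    congr <;> field_simp <;> ring
  simp only [hinv, diagonal_fin_two, cons_val_zero, cons_val_one, mul_fin_two]
  congr <;> field_simp <;> ring

lemma transition_entries {ε q ω a b : ℂ} {gH gL gp gm : ℝ → ℂ} {T : ℝ → Matrix (Fin 2) (Fin 2) ℂ}
    (hε : ε ≠ 0) (hq : q ≠ 0)
    (hgp : ∀ t, gp t = (gH t + gL t) / 2) (hgm : ∀ t, gm t = (gH t - gL t) / 2)
    (hT : ∀ t, T t = !![ε * q, ε * q; q, -q] * diagonal ![gH t, gL t] *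
      (!![ε * q, ε * q; q, -q])⁻¹ * (ω • !![a, b; -conj b, conj a])) :
    (∀ t, T t 0 0 = ω * a * gp t + -(ω * ε * conj b) * gm t) ∧
    (∀ t, T t 0 1 = ω * b * gp t + ω * ε * conj a * gm t) ∧
    (∀ t, T t 1 0 = -(ω * conj b) * gp t + ω * ε⁻¹ * a * gm t) ∧
    (∀ t, T t 1 1 = ω * conj a * gp t + ω * ε⁻¹ * b * gm t) := by
  have hpq : ε * q / q = ε := mul_div_cancel_right₀ ε hq
  have hqp : q / (ε * q) = ε⁻¹ := by field_simp
  simp only [hT, mixing_mul_diagonal_mul_inv (mul_ne_zero hε hq) hq, hpq, hqp, hgp, hgm]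
  refine ⟨?_, ?_, ?_, ?_⟩ <;> intro t <;>
    simp only [smul_of, smul_cons, smul_eq_mul, Matrix.smul_empty, mul_apply, of_apply, cons_val',
      cons_val_fin_one, cons_val_zero, cons_val_one, Fin.sum_univ_two] <;> ring

-- The `W` of `Z = |W|²`.
noncomputable def oscillationAmplitude (x δ : ℝ) (a b : ℂ) : ℂ :=
  2 * a * conj b + I * x * (cexp (-(I * δ)) * a ^ 2 + cexp (I * δ) * conj b ^ 2)

section EvenOdd

variable {mH mL Γ x : ℝ} {gp gm : ℝ → ℂ} (hΓ : 0 < Γ) (hx : x = (mH - mL) / Γ)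
  (hgp : ∀ t, gp t = (decayAmplitude mH Γ t + decayAmplitude mL Γ t) / 2)
  (hgm : ∀ t, gm t = (decayAmplitude mH Γ t - decayAmplitude mL Γ t) / 2)
include hΓ hx hgp hgm

lemma integral_norm_sq_even :
    ∫ t : ℝ in Ioi 0, ‖gp t‖ ^ 2 = (2 + x ^ 2) / (2 * Γ * (1 + x ^ 2)) := by
  apply ofReal_injective
  have h := integral_conj_mul_even_odd hΓ hx hgp hgm 1 0 1 0
  simp only [one_mul, zero_mul, add_zero, map_one, map_zero, mul_zero, sub_zero, conj_mul'] at h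
  rw [← integral_complex_ofReal]
  push_cast
  rw [h]

lemma integral_norm_sq_odd :
    ∫ t : ℝ in Ioi 0, ‖gm t‖ ^ 2 = x ^ 2 / (2 * Γ * (1 + x ^ 2)) := by
  apply ofReal_injective
  have h := integral_conj_mul_even_odd hΓ hx hgp hgm 0 1 0 1
  simp only [one_mul, zero_mul, zero_add, map_one, map_zero, mul_zero, sub_zero, conj_mul'] at h
  rw [← integral_complex_ofReal]
  push_cast
  rw [h]

variable {ω : ℂ} (hω : ‖ω‖ = 1) (δ : ℝ) (a b : ℂ)
include hω

-- `T11, T12, …` are the paper's 1-based entries: `T11` is `T t 0 0`.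
lemma integral_conj_T11_mul_T12 :
    ∫ t : ℝ in Ioi 0,
        conj (ω * a * gp t + -(ω * cexp (I * δ) * conj b) * gm t) *
          (ω * b * gp t + ω * cexp (I * δ) * conj a * gm t) =
      conj (oscillationAmplitude x δ a b) / (2 * Γ * (1 + x ^ 2)) := by
  have hε0 := exp_ne_zero (I * δ)
  have hω0 : ω ≠ 0 := norm_ne_zero_iff.mp (hω ▸ one_ne_zero)
  rw [integral_conj_mul_even_odd hΓ hx hgp hgm, oscillationAmplitude, exp_neg]
  simp only [map_mul, map_neg, map_add, map_pow, map_ofNat, map_inv₀, conj_conj, conj_I,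
    conj_ofReal, ← inv_eq_conj hω, ← inv_eq_conj (norm_exp_I_mul_ofReal δ)]
  field_simp
  ring

lemma integral_conj_T22_mul_T21 :
    ∫ t : ℝ in Ioi 0,
        conj (ω * conj a * gp t + ω * (cexp (I * δ))⁻¹ * b * gm t) *
          (-(ω * conj b) * gp t + ω * (cexp (I * δ))⁻¹ * a * gm t) =
      -oscillationAmplitude x δ a b / (2 * Γ * (1 + x ^ 2)) := by
  have hε0 := exp_ne_zero (I * δ)
  have hω0 : ω ≠ 0 := norm_ne_zero_iff.mp (hω ▸ one_ne_zero)
  rw [integral_conj_mul_even_odd hΓ hx hgp hgm, oscillationAmplitude, exp_neg]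
  simp only [map_mul, map_inv₀, conj_conj, ← inv_eq_conj hω,
    ← inv_eq_conj (norm_exp_I_mul_ofReal δ)]
  field_simp
  ring

end EvenOdd

lemma dilepton_counts {B Γ ζ x Z Ip Im : ℝ} {r₁ r₂ I₁ I₂ W : ℂ} (hΓ : 0 < Γ)
    (hr₁ : ‖r₁‖ = 1) (hr₂ : ‖r₂‖ = 1) (hZ : Z = ‖W‖ ^ 2)
    (hIp : Ip = (2 + x ^ 2) / (2 * Γ * (1 + x ^ 2))) (hIm : Im = x ^ 2 / (2 * Γ * (1 + x ^ 2)))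
    (hI₁ : I₁ = conj W / (2 * Γ * (1 + x ^ 2))) (hI₂ : I₂ = -W / (2 * Γ * (1 + x ^ 2))) :
    B ^ 2 / (2 * Γ) * ‖r₁‖ ^ 2 * Im + ζ * B ^ 2 * ‖I₁‖ ^ 2 =
        B ^ 2 / (4 * Γ ^ 2) * (x ^ 2 / (1 + x ^ 2) + ζ * Z / (1 + x ^ 2) ^ 2) ∧
    B ^ 2 / (2 * Γ) * ‖r₂‖ ^ 2 * Im + ζ * B ^ 2 * ‖I₂‖ ^ 2 =
        B ^ 2 / (4 * Γ ^ 2) * (x ^ 2 / (1 + x ^ 2) + ζ * Z / (1 + x ^ 2) ^ 2) ∧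
    B ^ 2 / (2 * Γ) * Ip + ζ * B ^ 2 * (I₁ * I₂).re =
        B ^ 2 / (4 * Γ ^ 2) * ((2 + x ^ 2) / (1 + x ^ 2) - ζ * Z / (1 + x ^ 2) ^ 2) := by
  have hK : (0 : ℝ) < 2 * Γ * (1 + x ^ 2) := by positivity
  have hnorm_div : ∀ w : ℂ, ‖w / (2 * Γ * (1 + x ^ 2))‖ = ‖w‖ / (2 * Γ * (1 + x ^ 2)) := fun w => by
    rw [norm_div]
    exact_mod_cast congrArg (‖w‖ / ·) (Complex.norm_of_nonneg hK.le)
  have hprod : (I₁ * I₂).re = -(Z / (2 * Γ * (1 + x ^ 2)) ^ 2) := by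
    rw [hI₁, hI₂, div_mul_div_comm, mul_neg, conj_mul', hZ]
    norm_cast
    ring
  refine ⟨?_, ?_, ?_⟩
  · rw [hr₁, hI₁, hnorm_div, RCLike.norm_conj, hIm, hZ]
    field_simp
    ring
  · rw [hr₂, hI₂, hnorm_div, norm_neg, hIm, hZ]
    field_simp
    ring
  · rw [hprod, hIp]
    field_simp
    ring

theorem stmt_15_general (mH mL Γ x : ℝ) (hΓ : 0 < Γ) (hx : x = (mH - mL) / Γ)
    (δ φ : ℝ) (a b : ℂ)
    (p q : ℂ) (hq : q ≠ 0) (hpq : p = Complex.exp (Complex.I * δ) * q)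
    (gH gL gp gm : ℝ → ℂ)
    (hgH : ∀ t, gH t = Complex.exp (-(Complex.I * mH + Γ / 2) * t))
    (hgL : ∀ t, gL t = Complex.exp (-(Complex.I * mL + Γ / 2) * t))
    (hgp : ∀ t, gp t = (gH t + gL t) / 2)
    (hgm : ∀ t, gm t = (gH t - gL t) / 2)
    (S M : Matrix (Fin 2) (Fin 2) ℂ)
    (hS : S = Complex.exp (Complex.I * φ) •
      !![a, b; -(starRingEnd ℂ) b, (starRingEnd ℂ) a])
    (hM : M = !![p, p; q, -q])
    (T : ℝ → Matrix (Fin 2) (Fin 2) ℂ)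
    (hT : ∀ t, T t = M * Matrix.diagonal ![gH t, gL t] * M⁻¹ * S)
    (B ζ Ip Im Z : ℝ)
    (hIp : Ip = ∫ t in Set.Ioi (0 : ℝ), ‖gp t‖ ^ 2)
    (hIm : Im = ∫ t in Set.Ioi (0 : ℝ), ‖gm t‖ ^ 2)
    (hZ : Z = ‖2 * a * (starRingEnd ℂ) b + Complex.I * (x : ℂ) *
      (Complex.exp (-(Complex.I * δ)) * a ^ 2 +
        Complex.exp (Complex.I * δ) * ((starRingEnd ℂ) b) ^ 2)‖ ^ 2)
    (Npp Nmm Npm Nmp : ℝ)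
    (hNpp : Npp = B ^ 2 / (2 * Γ) * ‖p / q‖ ^ 2 * Im +
      ζ * B ^ 2 *
        ‖∫ t in Set.Ioi (0 : ℝ), (starRingEnd ℂ) (T t 0 0) * T t 0 1‖ ^ 2)
    (hNmm : Nmm = B ^ 2 / (2 * Γ) * ‖q / p‖ ^ 2 * Im +
      ζ * B ^ 2 *
        ‖∫ t in Set.Ioi (0 : ℝ), (starRingEnd ℂ) (T t 1 1) * T t 1 0‖ ^ 2)
    (hNpm : Npm = B ^ 2 / (2 * Γ) * Ip +
      ζ * B ^ 2 *
        ((∫ t in Set.Ioi (0 : ℝ), (starRingEnd ℂ) (T t 0 0) * T t 0 1) *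
          (∫ t in Set.Ioi (0 : ℝ), (starRingEnd ℂ) (T t 1 1) * T t 1 0)).re)
    (hNmp : Nmp = Npm) :
    Npp = B ^ 2 / (4 * Γ ^ 2) *
        (x ^ 2 / (1 + x ^ 2) + ζ * Z / (1 + x ^ 2) ^ 2) ∧
    Nmm = B ^ 2 / (4 * Γ ^ 2) *
        (x ^ 2 / (1 + x ^ 2) + ζ * Z / (1 + x ^ 2) ^ 2) ∧
    Npm = B ^ 2 / (4 * Γ ^ 2) *
        ((2 + x ^ 2) / (1 + x ^ 2) - ζ * Z / (1 + x ^ 2) ^ 2) ∧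
    Nmp = B ^ 2 / (4 * Γ ^ 2) *
        ((2 + x ^ 2) / (1 + x ^ 2) - ζ * Z / (1 + x ^ 2) ^ 2) := by
  subst hpq hM hS
  have hgp' : ∀ t, gp t = (decayAmplitude mH Γ t + decayAmplitude mL Γ t) / 2 := fun t => by
    rw [hgp, hgH, hgL, decayAmplitude, decayAmplitude]
  have hgm' : ∀ t, gm t = (decayAmplitude mH Γ t - decayAmplitude mL Γ t) / 2 := fun t => by
    rw [hgm, hgH, hgL, decayAmplitude, decayAmplitude]
  obtain ⟨hT₁₁, hT₁₂, hT₂₁, hT₂₂⟩ := transition_entries (exp_ne_zero _) hq hgp hgm hT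
  have hI₁ : ∫ t in Ioi (0 : ℝ), conj (T t 0 0) * T t 0 1 =
      conj (oscillationAmplitude x δ a b) / (2 * Γ * (1 + x ^ 2)) := by
    simp only [hT₁₁, hT₁₂]
    exact integral_conj_T11_mul_T12 hΓ hx hgp' hgm' (norm_exp_I_mul_ofReal φ) δ a b
  have hI₂ : ∫ t in Ioi (0 : ℝ), conj (T t 1 1) * T t 1 0 =
      -oscillationAmplitude x δ a b / (2 * Γ * (1 + x ^ 2)) := by
    simp only [hT₂₁, hT₂₂]
    exact integral_conj_T22_mul_T21 hΓ hx hgp' hgm' (norm_exp_I_mul_ofReal φ) δ a b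
  have hε : ‖cexp (I * δ)‖ = 1 := norm_exp_I_mul_ofReal δ
  obtain ⟨hNpp', hNmm', hNpm'⟩ := dilepton_counts (B := B) (ζ := ζ)
    (r₁ := cexp (I * δ) * q / q) (r₂ := q / (cexp (I * δ) * q)) hΓ
    (by rwa [mul_div_cancel_right₀ _ hq]) (by rwa [div_mul_cancel_right₀ hq, norm_inv, inv_eq_one])
    hZ (hIp.trans (integral_norm_sq_even hΓ hx hgp' hgm'))
    (hIm.trans (integral_norm_sq_odd hΓ hx hgp' hgm')) hI₁ hI₂
  subst hNpp hNmm hNpm hNmp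
  exact ⟨hNpp', hNmm', hNpm', hNpm'⟩

theorem stmt_15 (mH mL Γ x : ℝ) (hΓ : 0 < Γ) (hx : x = (mH - mL) / Γ)
    (δ φ : ℝ) (a b : ℂ) (hab : ‖a‖ ^ 2 + ‖b‖ ^ 2 = 1)
    (p q : ℂ) (hq : q ≠ 0) (hpq : p = Complex.exp (Complex.I * δ) * q)
    (hnorm : ‖p‖ ^ 2 + ‖q‖ ^ 2 = 1)
    (gH gL gp gm : ℝ → ℂ)
    (hgH : ∀ t, gH t = Complex.exp (-(Complex.I * mH + Γ / 2) * t))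
    (hgL : ∀ t, gL t = Complex.exp (-(Complex.I * mL + Γ / 2) * t))
    (hgp : ∀ t, gp t = (gH t + gL t) / 2)
    (hgm : ∀ t, gm t = (gH t - gL t) / 2)
    (S M : Matrix (Fin 2) (Fin 2) ℂ)
    (hS : S = Complex.exp (Complex.I * φ) •
      !![a, b; -(starRingEnd ℂ) b, (starRingEnd ℂ) a])
    (hM : M = !![p, p; q, -q])
    (T : ℝ → Matrix (Fin 2) (Fin 2) ℂ)
    (hT : ∀ t, T t = M * Matrix.diagonal ![gH t, gL t] * M⁻¹ * S)
    (B ζ Ip Im Z : ℝ) (hB : 0 < B)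
    (hIp : Ip = ∫ t in Set.Ioi (0 : ℝ), ‖gp t‖ ^ 2)
    (hIm : Im = ∫ t in Set.Ioi (0 : ℝ), ‖gm t‖ ^ 2)
    (hZ : Z = ‖2 * a * (starRingEnd ℂ) b + Complex.I * (x : ℂ) *
      (Complex.exp (-(Complex.I * δ)) * a ^ 2 +
        Complex.exp (Complex.I * δ) * ((starRingEnd ℂ) b) ^ 2)‖ ^ 2)
    (Npp Nmm Npm Nmp : ℝ)
    (hNpp : Npp = B ^ 2 / (2 * Γ) * ‖p / q‖ ^ 2 * Im +
      ζ * B ^ 2 *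
        ‖∫ t in Set.Ioi (0 : ℝ), (starRingEnd ℂ) (T t 0 0) * T t 0 1‖ ^ 2)
    (hNmm : Nmm = B ^ 2 / (2 * Γ) * ‖q / p‖ ^ 2 * Im +
      ζ * B ^ 2 *
        ‖∫ t in Set.Ioi (0 : ℝ), (starRingEnd ℂ) (T t 1 1) * T t 1 0‖ ^ 2)
    (hNpm : Npm = B ^ 2 / (2 * Γ) * Ip +
      ζ * B ^ 2 *
        ((∫ t in Set.Ioi (0 : ℝ), (starRingEnd ℂ) (T t 0 0) * T t 0 1) *
          (∫ t in Set.Ioi (0 : ℝ), (starRingEnd ℂ) (T t 1 1) * T t 1 0)).re)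
    (hNmp : Nmp = Npm) :
    Npp = B ^ 2 / (4 * Γ ^ 2) *
        (x ^ 2 / (1 + x ^ 2) + ζ * Z / (1 + x ^ 2) ^ 2) ∧
    Nmm = B ^ 2 / (4 * Γ ^ 2) *
        (x ^ 2 / (1 + x ^ 2) + ζ * Z / (1 + x ^ 2) ^ 2) ∧
    Npm = B ^ 2 / (4 * Γ ^ 2) *
        ((2 + x ^ 2) / (1 + x ^ 2) - ζ * Z / (1 + x ^ 2) ^ 2) ∧
    Nmp = B ^ 2 / (4 * Γ ^ 2) *
        ((2 + x ^ 2) / (1 + x ^ 2) - ζ * Z / (1 + x ^ 2) ^ 2) :=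
  stmt_15_general mH mL Γ x hΓ hx δ φ a b p q hq hpq gH gL gp gm hgH hgL hgp hgm S M hS hM T hT B ζ
    Ip Im Z hIp hIm hZ Npp Nmm Npm Nmp hNpp hNmm hNpm hNmp
end
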